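/- arXiv:2008.08506 — 5 statements merged into one kernel-verified Lean document; each statement's English description precedes it below -/
import Mathlib

section
/- For every k ≥ 2, the words x_{2k} and x_{2k+1} are palindromes, and the following decompositions hold: s_{2k} = x_{2k-1}·ba·x_{2k-2}·ab = x_{2k-2}·ab·x_{2k-1}·ab, and s_{2k+1} = x_{2k}·ab·x_{2k-1}·ba = x_{2k-1}·ba·x_{2k}·ba. In particular, x_{2k} = x_{2k-1}·ba·x_{2k-2} = x_{2k-2}·ab·x_{2k-1}. -/
namespace BWT

/-- The two-letter ordered alphabet `{a, b}` with `a < b`, encoded as `Bool` with `a = false`. -/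
abbrev Letter := Bool

/-- The letter `a`. -/
abbrev la : Letter := false

/-- The letter `b`. -/
abbrev lb : Letter := true

/-- A (binary) word. -/
abbrev Word := List Letter

/-- All conjugates (rotations) of a word, listed by rotation amount. -/
def rotations (w : Word) : List Word := (List.range w.length).map w.rotate

/-- A word is primitive if all of its `|w|` conjugates are distinct. -/
def Primitive (w : Word) : Prop := (rotations w).Nodup

/-- The conjugates of `w`, sorted lexicographically. -/
def sortedRotations (w : Word) : List Word := (rotations w).insertionSort (· ≤ ·)

/-- The Burrows–Wheeler transform: last letters of the lexicographically sorted conjugates. -/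
def bwt (w : Word) : Word := (sortedRotations w).map (fun u => u.getLastD la)

/-- Number of maximal equal-letter runs of a word. -/
def runs (w : Word) : ℕ := (w.destutter (· ≠ ·)).length

/-- `r(w)`: the number of runs of the BWT of `w`. -/
def rr (w : Word) : ℕ := runs (bwt w)

/-- The runs-ratio `ρ(w)`. -/
def rho (w : Word) : ℚ :=
  max ((rr w : ℚ) / (rr w.reverse : ℚ)) ((rr w.reverse : ℚ) / (rr w : ℚ))

/-- `n`-th power (concatenation) of a word. -/
def wpow (w : Word) : ℕ → Word
  | 0 => []
  | n + 1 => w ++ wpow w n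

/-- Standard words for the directive sequence `d`:
`s 0 = b`, `s 1 = a`, `s (i+2) = (s (i+1))^(d i) · s i`. -/
def std (d : ℕ → ℕ) : ℕ → Word
  | 0 => [lb]
  | 1 => [la]
  | n + 2 => wpow (std d (n + 1)) (d n) ++ std d n

/-- Fibonacci words: `s 0 = b`, `s 1 = a`, `s (i+2) = s (i+1) · s i`. -/
def fw : ℕ → Word
  | 0 => [lb]
  | 1 => [la]
  | n + 2 => fw (n + 1) ++ fw n

/-- Fibonacci numbers with `F 0 = F 1 = 1`. -/
def fib : ℕ → ℕ
  | 0 => 1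
  | 1 => 1
  | n + 2 => fib (n + 1) + fib n

/-- The word `x i`, i.e. the Fibonacci word of order `i` with its last two letters removed
(so that `s_{2k} = x_{2k}·ab` and `s_{2k+1} = x_{2k+1}·ba`). -/
def x (i : ℕ) : Word := (fw i).take ((fw i).length - 2)

/-- `u` is a circular factor of `w`: a prefix of some conjugate of `w`. -/
def CircFactor (u w : Word) : Prop := ∃ i < w.length, u <+: w.rotate i

/-- A circular factor `u` is left-special in `w` if both `a·u` and `b·u` are circular factors. -/
def LeftSpecial (u w : Word) : Prop := CircFactor (la :: u) w ∧ CircFactor (lb :: u) w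

/-- Number of occurrences of `u` as a circular factor of `w`. -/
def occ (u w : Word) : ℕ :=
  ((List.range w.length).filter (fun j => decide (u <+: w.rotate j))).length

end BWT


namespace BWT

/-- Last two letters of `fw (n+2)` (depending on parity of `n`). -/
def tt' (n : ℕ) : Word := if n % 2 = 0 then [la, lb] else [lb, la]

lemma t_two (n : ℕ) : tt' (n+2) = tt' n := by unfold tt'; simp [Nat.add_mod_right]

lemma t_rev (n : ℕ) : (tt' (n+1)).reverse = tt' n := by
  unfold tt'
  rcases Nat.mod_two_eq_zero_or_one n with h | h <;> simp [h, Nat.add_mod]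

lemma t_even (m : ℕ) : tt' (2*m) = [la, lb] := by unfold tt'; simp [Nat.mul_mod_right]

lemma t_odd (m : ℕ) : tt' (2*m+1) = [lb, la] := by
  unfold tt'; simp [Nat.add_mod, Nat.mul_mod_right]

lemma x_of (n : ℕ) (u : Word) (h : fw (n+2) = u ++ tt' n) : x (n+2) = u := by
  have hl2 : (tt' n).length = 2 := by unfold tt'; split <;> rfl
  have hl : (fw (n+2)).length = u.length + 2 := by rw [h, List.length_append, hl2]
  unfold x
  rw [hl, h]
  simp [List.take_left]

lemma fw_ends : ∀ n, (∃ u, fw (n+2) = u ++ tt' n) ∧ (∃ u, fw (n+3) = u ++ tt' (n+1)) := by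
  intro n
  induction n with
  | zero => exact ⟨⟨[], rfl⟩, ⟨[la], rfl⟩⟩
  | succ m ih =>
    refine ⟨ih.2, ?_⟩
    obtain ⟨u, hu⟩ := ih.1
    exact ⟨fw (m+3) ++ u, by rw [show m+1+3 = m+2+2 from rfl, fw, t_two, hu, List.append_assoc]⟩

lemma fw_eq (n : ℕ) : fw (n+2) = x (n+2) ++ tt' n := by
  obtain ⟨u, hu⟩ := (fw_ends n).1
  rw [x_of n u hu, hu]

lemma x_rec (n : ℕ) : x (n+4) = x (n+3) ++ tt' (n+1) ++ x (n+2) := by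
  apply x_of
  rw [show n+4 = n+2+2 from rfl, fw, fw_eq (n+1), fw_eq n, t_two]
  simp [List.append_assoc]

lemma x_comm : ∀ n, x (n+3) ++ tt' (n+1) ++ x (n+2) = x (n+2) ++ tt' n ++ x (n+3) := by
  intro n
  induction n with
  | zero =>
    have h2 : x 2 = [] := rfl
    have h3 : x 3 = [la] := rfl
    rw [h2, h3]; rfl
  | succ m ih =>
    rw [show m+1+3 = m+4 from rfl, show m+1+2 = m+3 from rfl, x_rec, t_two]
    simp only [List.append_assoc] at ih ⊢
    rw [ih]

lemma x_pal : ∀ n, (x (n+2)).reverse = x (n+2) ∧ (x (n+3)).reverse = x (n+3) := by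
  intro n
  induction n with
  | zero => exact ⟨rfl, rfl⟩
  | succ m ih =>
    refine ⟨ih.2, ?_⟩
    rw [show m+1+3 = m+4 from rfl, x_rec]
    simp only [List.reverse_append, t_rev, ih.1, ih.2, List.append_assoc]
    have := x_comm m
    simp only [List.append_assoc] at this
    rw [← this]

end BWT

open BWT in
/-- palindromicity of `x_{2k}`, `x_{2k+1}` and the standard decompositions of
`s_{2k}`, `s_{2k+1}` and `x_{2k}`. -/
theorem stmt1 (k : ℕ) (hk : 2 ≤ k) :
    (x (2*k)).reverse = x (2*k) ∧
    (x (2*k+1)).reverse = x (2*k+1) ∧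
    fw (2*k) = x (2*k-1) ++ [lb, la] ++ x (2*k-2) ++ [la, lb] ∧
    fw (2*k) = x (2*k-2) ++ [la, lb] ++ x (2*k-1) ++ [la, lb] ∧
    fw (2*k+1) = x (2*k) ++ [la, lb] ++ x (2*k-1) ++ [lb, la] ∧
    fw (2*k+1) = x (2*k-1) ++ [lb, la] ++ x (2*k) ++ [lb, la] ∧
    x (2*k) = x (2*k-1) ++ [lb, la] ++ x (2*k-2) ∧
    x (2*k) = x (2*k-2) ++ [la, lb] ++ x (2*k-1) := by
  obtain ⟨m, rfl⟩ : ∃ m, k = m + 2 := ⟨k - 2, by omega⟩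
  have e2 : 2*(m+2)+1 = (2*m+3)+2 := by ring
  have e1 : 2*(m+2) = (2*m+2)+2 := by ring
  have e3 : 2*(m+2)-1 = 2*m+3 := by omega
  have e4 : 2*(m+2)-2 = 2*m+2 := by omega
  rw [e3, e4, e2, e1]
  have hab : tt' (2*m+2) = [la, lb] := by rw [show 2*m+2 = 2*(m+1) from by ring, t_even]
  have hba : tt' (2*m+1) = [lb, la] := t_odd m
  have hba' : tt' (2*m+3) = [lb, la] := by rw [show 2*m+3 = 2*(m+1)+1 from by ring, t_odd]
  have A : fw (2*m+2+2) = x (2*m+2+2) ++ tt' (2*m+2) := fw_eq (2*m+2)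
  have B : fw (2*m+3+2) = x (2*m+3+2) ++ tt' (2*m+3) := fw_eq (2*m+3)
  have R4 : x (2*m+2+2) = x (2*m+3) ++ [lb, la] ++ x (2*m+2) := by
    have h := x_rec (2*m)
    rwa [show 2*m+4 = 2*m+2+2 from rfl, hba] at h
  have R5 : x (2*m+3+2) = x (2*m+2+2) ++ [la, lb] ++ x (2*m+3) := by
    have h := x_rec (2*m+1)
    rwa [show 2*m+1+4 = 2*m+3+2 from rfl, show 2*m+1+3 = 2*m+2+2 from rfl,
      show 2*m+1+2 = 2*m+3 from rfl, show 2*m+1+1 = 2*m+2 from rfl, hab] at h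
  have C4 : x (2*m+3) ++ [lb, la] ++ x (2*m+2) = x (2*m+2) ++ [la, lb] ++ x (2*m+3) := by
    have h := x_comm (2*m)
    rwa [show 2*m+3 = 2*m+3 from rfl, show 2*m+1 = 2*m+1 from rfl, hba,
      show tt' (2*m) = [la, lb] from t_even m] at h
  have C5 : x (2*m+2+2) ++ [la, lb] ++ x (2*m+3) = x (2*m+3) ++ [lb, la] ++ x (2*m+2+2) := by
    have h := x_comm (2*m+1)
    rwa [show 2*m+1+3 = 2*m+2+2 from rfl, show 2*m+1+2 = 2*m+3 from rfl,
      show 2*m+1+1 = 2*m+2 from rfl, hab, hba] at h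
  refine ⟨(x_pal (2*m+2)).1, (x_pal (2*m+3)).1, ?_, ?_, ?_, ?_, R4, R4.trans C4⟩
  · rw [A, hab, R4]
  · rw [A, hab, R4, C4]
  · rw [B, hba', R5]
  · rw [B, hba', R5, C5]
end

section
/- For every i ≥ 2, the word a·x_i·b is a Lyndon word, i.e., it is primitive and lexicographically strictly smaller than each of its other conjugates. -/
/-!
Write `w i = a·x_i·b`. Since `s_{n+1} s_n` and `s_n s_{n+1}` differ only in their last two
letters, `w (2k+4) = w (2k+3) · w (2k+2)` and `w (2k+5) = w (2k+3) · w (2k+4)`. Starting from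
`w 2 = ab` and `w 3 = aab`, the Chen–Fox lemma (if `u`, `v` are Lyndon and `uv < v`, then `uv`
is Lyndon) propagates the Lyndon property along these factorizations, with the invariant
`w (2k+3) < w (2k+2)` supplying the comparison `uv < v` at each step.
-/

namespace BWT

section Lyndon

variable {α : Type*}

/-- Comparison at a mismatch position; unlike `<` on lists it survives extending both sides. -/
def MismatchLt [LT α] (u v : List α) : Prop :=
  ∃ p c d s t, c < d ∧ u = p ++ c :: s ∧ v = p ++ d :: t

/-- Lyndon words through their proper suffixes: a Lyndon word is unbordered, so it is smaller
than each proper suffix at a mismatch position. -/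
def IsLyndon [LT α] (w : List α) : Prop :=
  ∀ s t, w = s ++ t → s ≠ [] → t ≠ [] → MismatchLt w t

section LT

variable [LT α] {u v w : List α}

theorem MismatchLt.append (h : MismatchLt u v) (s t : List α) :
    MismatchLt (u ++ s) (v ++ t) := by
  obtain ⟨p, c, d, u', v', hcd, rfl, rfl⟩ := h
  exact ⟨p, c, d, u' ++ s, v' ++ t, hcd, by simp, by simp⟩

theorem MismatchLt.append_left (h : MismatchLt u v) (p : List α) :
    MismatchLt (p ++ u) (p ++ v) := by
  obtain ⟨q, c, d, u', v', hcd, rfl, rfl⟩ := h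
  exact ⟨p ++ q, c, d, u', v', hcd, by simp, by simp⟩

theorem MismatchLt.lt (h : MismatchLt u v) : u < v := by
  obtain ⟨p, c, d, u', v', hcd, rfl, rfl⟩ := h
  induction p with
  | nil => exact List.Lex.rel hcd
  | cons a p ih => exact List.Lex.cons ih

theorem isLyndon_singleton (c : α) : IsLyndon [c] := by
  intro s t h hs ht
  have hlen := congrArg List.length h
  simp only [List.length_singleton, List.length_append] at hlen
  have := List.length_pos_iff.2 hs
  have := List.length_pos_iff.2 ht
  omega

theorem IsLyndon.mismatchLt_rotate (hw : IsLyndon w) {j : ℕ} (hj : 0 < j) (hjw : j < w.length) :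
    MismatchLt w (w.rotate j) := by
  have htake : w.take j ≠ [] := by
    simpa [List.take_eq_nil_iff] using ⟨hj.ne', List.ne_nil_of_length_pos (hj.trans hjw)⟩
  have hdrop : w.drop j ≠ [] := by simpa using hjw
  rw [List.rotate_eq_drop_append_take hjw.le]
  simpa using (hw _ _ (w.take_append_drop j).symm htake hdrop).append [] (w.take j)

end LT

section Preorder

variable [Preorder α] {u v w : List α}

theorem MismatchLt.irrefl (w : List α) : ¬ MismatchLt w w := by
  rintro ⟨p, c, d, s, t, hcd, h, h'⟩
  rw [h, List.append_cancel_left_eq, List.cons.injEq] at h'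
  exact hcd.ne h'.1

theorem MismatchLt.trans (huv : MismatchLt u v) (hvw : MismatchLt v w) : MismatchLt u w := by
  obtain ⟨p, c, d, u', v', hcd, rfl, hv⟩ := huv
  obtain ⟨q, d', e, v'', w', hde, hv', rfl⟩ := hvw
  rcases List.append_eq_append_iff.mp (hv.symm.trans hv') with ⟨r, rfl, hr⟩ | ⟨r, rfl, hr⟩
  · cases r with
    | nil =>
      obtain ⟨rfl, rfl⟩ := List.cons.inj hr
      exact ⟨p, c, e, u', w', hcd.trans hde, rfl, by simp⟩
    | cons f r =>
      obtain ⟨rfl, rfl⟩ := List.cons.inj hr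
      exact ⟨p, c, d, u', r ++ e :: w', hcd, rfl, by simp⟩
  · cases r with
    | nil =>
      obtain ⟨rfl, rfl⟩ := List.cons.inj hr
      exact ⟨q, c, e, u', w', hcd.trans hde, by simp, rfl⟩
    | cons f r =>
      obtain ⟨rfl, rfl⟩ := List.cons.inj hr
      exact ⟨q, d', e, r ++ c :: u', w', hde, by simp, rfl⟩

/-- Chen–Fox. -/
theorem IsLyndon.append (hu : IsLyndon u) (hv : IsLyndon v) (huv : MismatchLt (u ++ v) v) :
    IsLyndon (u ++ v) := by
  intro s t h hs ht
  rcases List.append_eq_append_iff.mp h with ⟨r, rfl, rfl⟩ | ⟨r, rfl, rfl⟩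
  · rcases eq_or_ne r [] with rfl | hr
    · simpa using huv
    · exact huv.trans (hv r t rfl hr ht)
  · rcases eq_or_ne r [] with rfl | hr
    · simpa using huv
    · exact (hu s r rfl hs hr).append v v

theorem IsLyndon.rotate_inj (hw : IsLyndon w) {p q : ℕ} (hp : p < w.length)
    (hq : q < w.length) (h : w.rotate p = w.rotate q) : p = q := by
  wlog hpq : p < q generalizing p q
  · rcases (not_lt.1 hpq).eq_or_lt with rfl | hqp
    · rfl
    · exact (this hq hp h.symm hqp).symm
  have hfix : w.rotate (q - p) = w := by
    rw [← List.rotate_eq_rotate (n := p), List.rotate_rotate, Nat.sub_add_cancel hpq.le, h]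
  have hlt := hw.mismatchLt_rotate (j := q - p) (by omega) (by omega)
  rw [hfix] at hlt
  exact (MismatchLt.irrefl w hlt).elim

end Preorder

end Lyndon

theorem IsLyndon.primitive {w : Word} (hw : IsLyndon w) : Primitive w :=
  List.nodup_range.map_on fun _ hp _ hq h =>
    hw.rotate_inj (List.mem_range.1 hp) (List.mem_range.1 hq) h

theorem fw_append_swap (n : ℕ) :
    ∃ z c d, fw (n + 1) ++ fw n = z ++ [c, d] ∧ fw n ++ fw (n + 1) = z ++ [d, c] := by
  induction n with
  | zero => exact ⟨[], la, lb, rfl, rfl⟩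
  | succ n ih =>
    obtain ⟨z, c, d, h₁, h₂⟩ := ih
    refine ⟨fw (n + 1) ++ z, d, c, ?_, ?_⟩
    · rw [fw, List.append_assoc, h₂, ← List.append_assoc]
    · rw [fw, List.append_assoc, h₁, ← List.append_assoc]

theorem suffix_fw (k : ℕ) : [la, lb] <:+ fw (2 * k + 2) ∧ [lb, la] <:+ fw (2 * k + 3) := by
  induction k with
  | zero => exact ⟨List.suffix_refl _, [la], rfl⟩
  | succ k ih =>
    exact ⟨ih.1.trans (List.suffix_append (fw (2 * k + 3)) _),
      ih.2.trans (List.suffix_append (fw (2 * k + 4)) _)⟩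

theorem x_append_of_suffix {n : ℕ} {c d : Letter} (h : [c, d] <:+ fw n) :
    x n ++ [c, d] = fw n := by
  obtain ⟨y, hy⟩ := h
  simp [x, ← hy]

theorem fw_even (k : ℕ) : fw (2 * k + 2) = x (2 * k + 2) ++ [la, lb] :=
  (x_append_of_suffix (suffix_fw k).1).symm

theorem fw_odd (k : ℕ) : fw (2 * k + 3) = x (2 * k + 3) ++ [lb, la] :=
  (x_append_of_suffix (suffix_fw k).2).symm

def axb (i : ℕ) : Word := la :: (x i ++ [lb])

theorem axb_even_succ (k : ℕ) : axb (2 * (k + 1) + 2) = axb (2 * k + 3) ++ axb (2 * k + 2) := by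
  have h : fw (2 * k + 3) ++ fw (2 * k + 2) = fw (2 * (k + 1) + 2) := rfl
  rw [fw_odd, fw_even, fw_even, ← List.append_assoc] at h
  simp [axb, ← List.append_cancel_right h]

theorem axb_odd_succ (k : ℕ) :
    axb (2 * (k + 1) + 3) = axb (2 * k + 3) ++ axb (2 * (k + 1) + 2) := by
  obtain ⟨z, c, d, h₁, h₂⟩ : ∃ z c d,
      fw (2 * (k + 1) + 2) ++ fw (2 * k + 3) = z ++ [c, d] ∧
      fw (2 * k + 3) ++ fw (2 * (k + 1) + 2) = z ++ [d, c] :=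
    fw_append_swap (2 * k + 3)
  obtain ⟨rfl, hcd⟩ : x (2 * (k + 1) + 3) = z ∧ [lb, la] = [c, d] :=
    List.append_inj' ((fw_odd (k + 1)).symm.trans h₁) rfl
  obtain ⟨rfl, rfl⟩ : lb = c ∧ la = d := by simpa using hcd
  rw [fw_odd, fw_even, ← List.append_assoc] at h₂
  simp [axb, ← List.append_cancel_right h₂]

theorem isLyndon_axb_pair (k : ℕ) : IsLyndon (axb (2 * k + 2)) ∧ IsLyndon (axb (2 * k + 3)) ∧
    MismatchLt (axb (2 * k + 3)) (axb (2 * k + 2)) := by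
  induction k with
  | zero =>
    have h₂ : IsLyndon (axb 2) := (isLyndon_singleton la).append (isLyndon_singleton lb)
      ⟨[], la, lb, [lb], [], rfl, rfl, rfl⟩
    have h₃₂ : MismatchLt (axb 3) (axb 2) := ⟨[la], la, lb, [lb], [], rfl, rfl, rfl⟩
    exact ⟨h₂, (isLyndon_singleton la).append h₂ h₃₂, h₃₂⟩
  | succ k ih =>
    obtain ⟨h_even, h_odd, h_lt⟩ := ih
    have h_lt_cat : MismatchLt (axb (2 * k + 3) ++ axb (2 * k + 2)) (axb (2 * k + 2)) := by
      simpa using h_lt.append (axb (2 * k + 2)) []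
    have h_even' : IsLyndon (axb (2 * (k + 1) + 2)) := by
      rw [axb_even_succ]
      exact h_odd.append h_even h_lt_cat
    have h_lt' : MismatchLt (axb (2 * (k + 1) + 3)) (axb (2 * (k + 1) + 2)) := by
      rw [axb_odd_succ, axb_even_succ]
      exact h_lt_cat.append_left _
    refine ⟨h_even', ?_, h_lt'⟩
    rw [axb_odd_succ] at h_lt' ⊢
    exact h_odd.append h_even' h_lt'

theorem isLyndon_axb {i : ℕ} (hi : 2 ≤ i) : IsLyndon (axb i) := by
  obtain ⟨k, rfl | rfl⟩ : ∃ k, i = 2 * k + 2 ∨ i = 2 * k + 3 := ⟨(i - 2) / 2, by omega⟩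
  · exact (isLyndon_axb_pair k).1
  · exact (isLyndon_axb_pair k).2.1

end BWT

open BWT in
/-- for every `i ≥ 2`, the word `a·x_i·b` is a Lyndon word: it is primitive and
lexicographically strictly smaller than each of its other conjugates. -/
theorem stmt2 (i : ℕ) (hi : 2 ≤ i) :
    Primitive (la :: (x i ++ [lb])) ∧
    ∀ j, 0 < j → j < (la :: (x i ++ [lb])).length →
      (la :: (x i ++ [lb])) < (la :: (x i ++ [lb])).rotate j := by
  have hw : IsLyndon (axb i) := isLyndon_axb hi
  exact ⟨hw.primitive, fun _ hj hjw => (hw.mismatchLt_rotate hj hjw).lt⟩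
end

section
/- For every k ≥ 2, the Fibonacci-plus word v = s_{2k}·b satisfies bwt(v) = b^{F_{2k-2}} · a^{F_{2k-1}-1} · b · a. In particular r(v) = 4. -/
/-!
Position `j` of the Fibonacci word `s_{n+2}` carries `b` exactly when `(j + 2) F_n mod F_{n+2}`
lies in `[1, F_n]` (`n` even) or in `[0, F_n)` (`n` odd). This follows by induction along
`s_{n+4} = s_{n+3} s_{n+2}`, because `F_{n+1}/F_{n+3}` and `F_{n+2}/F_{n+4}` are Farey neighbours.

For `v = s_{2k} b` put `p = F_{2k-2}`, `q = F_{2k-1}`, `N = F_{2k}`, so that `p² ≡ -1` and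
`q p ≡ 1 (mod N)`. Moving a position forward by `q`, or back by `p`, raises `(x + 2) p mod N` by
one, which keeps the letter except at the two ends of the band `[1, p]`. So the conjugates starting
at `i` and `i + q` (for `i < p - 1`), or at `i` and `i - p` (for `i ≥ p`), agree up to a single
mismatch `a < b`. Hence the sorted conjugates start at `(j + 1) q - 1 mod N` for `j < N - 1`,
followed by those starting at `N` and `N - 1`, and their last letters spell `b^p a^(q-1) b a`.
-/

namespace BWT

section Fibonacci

theorem fib_add_two (n : ℕ) : fib (n + 2) = fib (n + 1) + fib n := rfl

theorem fib_pos : ∀ n, 0 < fib n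
  | 0 | 1 => Nat.one_pos
  | n + 2 => Nat.add_pos_left (fib_pos (n + 1)) _

theorem length_fw : ∀ n, (fw n).length = fib n
  | 0 | 1 => rfl
  | n + 2 => by rw [fw, List.length_append, length_fw (n + 1), length_fw n, fib_add_two]

theorem fib_cassini (n : ℕ) : (fib n * fib (n + 2) : ℤ) = fib (n + 1) ^ 2 + (-1) ^ n := by
  induction n with
  | zero => norm_num [fib]
  | succ n ih =>
    simp only [fib_add_two, Nat.cast_add] at ih ⊢
    linear_combination (-1 : ℤ) * ih

theorem fib_dOcagne (n : ℕ) :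
    (fib (n + 1) * fib (n + 4) : ℤ) = fib (n + 2) * fib (n + 3) - (-1) ^ n := by
  have h := fib_cassini n
  simp only [fib_add_two, Nat.cast_add] at h ⊢
  linear_combination (-1 : ℤ) * h

theorem fib_catalan (n : ℕ) : (fib n * fib (n + 4) : ℤ) = fib (n + 2) ^ 2 + (-1) ^ n := by
  have h := fib_cassini n
  simp only [fib_add_two, Nat.cast_add] at h ⊢
  linear_combination h

theorem fib_dOcagne_of_even {n : ℕ} (hn : Even n) :
    fib (n + 2) * fib (n + 3) = fib (n + 1) * fib (n + 4) + 1 := by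
  have h := fib_dOcagne n
  rw [hn.neg_one_pow] at h
  omega

theorem fib_dOcagne_of_odd {n : ℕ} (hn : Odd n) :
    fib (n + 1) * fib (n + 4) = fib (n + 2) * fib (n + 3) + 1 := by
  have h := fib_dOcagne n
  rw [hn.neg_one_pow] at h
  omega

theorem fib_catalan_of_even {n : ℕ} (hn : Even n) :
    fib (n + 2) ^ 2 + 1 = fib n * fib (n + 4) := by
  have h := fib_catalan n
  rw [hn.neg_one_pow] at h
  exact_mod_cast h.symm

end Fibonacci

section Mechanical

def UpperMech (p N y : ℕ) : Prop := 1 ≤ y % N ∧ y % N ≤ p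

instance (p N y : ℕ) : Decidable (UpperMech p N y) := inferInstanceAs (Decidable (_ ∧ _))

def LowerMech (p N y : ℕ) : Prop := y % N < p

theorem mod_eq_sub_of_mul_le {N y k : ℕ} (hk : k * N ≤ y) (hy : y < k * N + N) :
    y % N = y - k * N :=
  Nat.mod_eq_iff.mpr (.inr ⟨by omega, k, by rw [Nat.mul_comm]; omega⟩)

theorem upperMech_iff {p N y : ℕ} (hpN : p < N) :
    UpperMech p N y ↔ ∃ k, k * N < y ∧ y ≤ k * N + p := by
  have := Nat.div_add_mod' y N
  constructor
  · rintro ⟨h1, h2⟩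
    exact ⟨y / N, by omega, by omega⟩
  · rintro ⟨k, h1, h2⟩
    rw [UpperMech, mod_eq_sub_of_mul_le (k := k) (by omega) (by omega)]
    omega

theorem lowerMech_iff {p N y : ℕ} (hpN : p ≤ N) :
    LowerMech p N y ↔ ∃ k, k * N ≤ y ∧ y < k * N + p := by
  have := Nat.div_add_mod' y N
  constructor
  · intro h
    exact ⟨y / N, by omega, by unfold LowerMech at h; omega⟩
  · rintro ⟨k, h1, h2⟩
    rw [LowerMech, mod_eq_sub_of_mul_le h1 (by omega)]
    omega

/-- `P/R < Q/S` are Farey neighbours, so no fraction `k/t` with `t < R + S` lies strictly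
between them. -/
theorem mul_lt_mul_iff_mul_le_mul_of_farey {P Q R S k t : ℕ} (hid : Q * R = P * S + 1)
    (ht : 0 < t) (htRS : t < R + S) : k * S < t * Q ↔ k * R ≤ t * P := by
  have hR : 0 < R := Nat.pos_of_ne_zero (by rintro rfl; simp at hid)
  constructor
  · intro h
    by_contra! h'
    -- `t = t (QR - PS) = R (tQ - kS) + S (kR - tP) ≥ R + S`
    have h1 : R * (k * S + 1) ≤ R * (t * Q) := Nat.mul_le_mul_left R h
    have h2 : S * (t * P + 1) ≤ S * (k * R) := Nat.mul_le_mul_left S h'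
    nlinarith
  · intro h
    refine Nat.lt_of_mul_lt_mul_left (a := R) ?_
    have h1 : S * (k * R) ≤ S * (t * P) := Nat.mul_le_mul_left S h
    nlinarith

theorem upperMech_iff_lowerMech {P Q R S u : ℕ} (hid : Q * R = P * S + 1) (hPR : P < R)
    (hQS : Q < S) (hu : 0 < u) (huRS : u + 1 < R + S) :
    UpperMech Q S ((u + 1) * Q) ↔ LowerMech P R ((u + 1) * P) := by
  rw [upperMech_iff hQS, lowerMech_iff hPR.le]
  refine exists_congr fun k => ?_
  have h1 := mul_lt_mul_iff_mul_le_mul_of_farey (k := k) (t := u + 1) hid (by omega) huRS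
  have h2 := mul_lt_mul_iff_mul_le_mul_of_farey (k := k) hid hu (by omega)
  simp only [add_mul, one_mul] at h1 ⊢
  omega

theorem mod_cases_of_modEq_add_one {N a b : ℕ} (hN : 0 < N) (h : b ≡ a + 1 [MOD N]) :
    (a % N + 1 < N ∧ b % N = a % N + 1) ∨ (a % N + 1 = N ∧ b % N = 0) := by
  have hb : b % N = (a % N + 1) % N := h.trans (Nat.mod_add_mod a N 1).symm
  have ha := Nat.mod_lt a hN
  rcases (Nat.lt_or_ge (a % N + 1) N) with hlt | hge
  · exact .inl ⟨hlt, hb.trans (Nat.mod_eq_of_lt hlt)⟩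
  · have heq : a % N + 1 = N := by omega
    exact .inr ⟨heq, by rw [hb, heq, Nat.mod_self]⟩

theorem upperMech_iff_of_modEq_add_one {p N a b : ℕ} (hpN : p < N) (h : b ≡ a + 1 [MOD N])
    (h0 : a % N ≠ 0) (hp : a % N ≠ p) : UpperMech p N b ↔ UpperMech p N a := by
  unfold UpperMech
  rcases mod_cases_of_modEq_add_one (by omega) h with ⟨-, hb⟩ | ⟨ha, hb⟩ <;> omega

theorem lowerMech_iff_of_modEq_add_one {p N a b : ℕ} (hN : 0 < N) (h : b ≡ a + 1 [MOD N])
    (h0 : b % N ≠ 0) (hp : b % N ≠ p) : LowerMech p N a ↔ LowerMech p N b := by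
  unfold LowerMech
  rcases mod_cases_of_modEq_add_one hN h with ⟨-, hb⟩ | ⟨-, hb⟩ <;> omega

theorem coprime_of_mul_eq_mul_add_one {a b c d : ℕ} (h : a * b = c * d + 1) : a.Coprime d := by
  have hab : a.gcd d ∣ a * b := (Nat.gcd_dvd_left a d).mul_right b
  rw [h] at hab
  exact Nat.dvd_one.mp ((Nat.dvd_add_right ((Nat.gcd_dvd_right a d).mul_left c)).mp hab)

theorem mul_mod_ne_zero {N p t : ℕ} (hc : N.Coprime p) (ht : 0 < t) (htN : t < N) :
    t * p % N ≠ 0 := fun h =>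
  absurd (Nat.le_of_dvd ht (hc.dvd_of_dvd_mul_right (Nat.dvd_of_mod_eq_zero h))) (by omega)

theorem add_one_mul_mod_ne {N p s : ℕ} (hc : N.Coprime p) (hs : 0 < s) (hsN : s < N)
    (hpN : p < N) : (s + 1) * p % N ≠ p := by
  intro h
  have hsp : s * p + p ≡ 0 + p [MOD N] := by
    rw [Nat.ModEq, zero_add, Nat.mod_eq_of_lt hpN, ← add_one_mul]
    exact h
  exact mul_mod_ne_zero hc hs hsN (Nat.ModEq.add_right_cancel' p hsp)

end Mechanical

section FibonacciWord

/-- `s_{n+2}` is the upper (`n` even) or lower (`n` odd) mechanical word of slope `F_n / F_{n+2}`,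
read from position `2`. -/
def FibMech (n y : ℕ) : Prop :=
  if Even n then UpperMech (fib n) (fib (n + 2)) y else LowerMech (fib n) (fib (n + 2)) y

theorem fib_lt_fib_add_two (n : ℕ) : fib n < fib (n + 2) := by
  have := fib_pos (n + 1)
  rw [fib_add_two]
  omega

theorem fibMech_add_two_iff {n u : ℕ} (hu : 0 < u) (huR : u ≤ fib (n + 3)) :
    FibMech (n + 2) ((u + 1) * fib (n + 2)) ↔ FibMech (n + 1) ((u + 1) * fib (n + 1)) := by
  have hS : fib (n + 4) = fib (n + 3) + fib (n + 2) := fib_add_two _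
  have hPR : fib (n + 1) < fib (n + 3) := fib_lt_fib_add_two _
  have hQS : fib (n + 2) < fib (n + 4) := fib_lt_fib_add_two _
  have huRS : u + 1 < fib (n + 3) + fib (n + 4) := by have := fib_pos (n + 1); omega
  rcases Nat.even_or_odd n with hn | hn
  · simp only [FibMech, hn, Nat.even_add_one, not_true, if_false]
    exact upperMech_iff_lowerMech (fib_dOcagne_of_even hn) hPR hQS hu huRS
  · simp only [FibMech, Nat.even_add_one, Nat.not_even_iff_odd.mpr hn, not_false_eq_true,
      not_true, if_false, if_true]
    exact (upperMech_iff_lowerMech (fib_dOcagne_of_odd hn) hQS hPR hu (by omega)).symm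

theorem coprime_fib_add_four_fib_add_two (n : ℕ) : (fib (n + 4)).Coprime (fib (n + 2)) := by
  rcases Nat.even_or_odd n with hn | hn
  · exact (coprime_of_mul_eq_mul_add_one (fib_dOcagne_of_even hn)).symm
  · refine coprime_of_mul_eq_mul_add_one (b := fib (n + 1)) (c := fib (n + 3)) ?_
    rw [Nat.mul_comm, fib_dOcagne_of_odd hn, Nat.mul_comm]

theorem fibMech_add_fib_iff {n t : ℕ} (ht : 2 ≤ t) (htQ : t ≤ fib (n + 2) + 1) :
    FibMech (n + 2) ((t + fib (n + 3)) * fib (n + 2)) ↔ FibMech (n + 2) (t * fib (n + 2)) := by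
  have hS : fib (n + 4) = fib (n + 3) + fib (n + 2) := fib_add_two _
  have hR : fib (n + 3) = fib (n + 2) + fib (n + 1) := fib_add_two _
  have hP := fib_pos (n + 1)
  have hcop := coprime_fib_add_four_fib_add_two n
  have h0 : t * fib (n + 2) % fib (n + 4) ≠ 0 := mul_mod_ne_zero hcop (by omega) (by omega)
  have hQ : t * fib (n + 2) % fib (n + 4) ≠ fib (n + 2) := by
    obtain ⟨s, rfl⟩ : ∃ s, t = s + 1 := ⟨t - 1, by omega⟩
    exact add_one_mul_mod_ne hcop (by omega) (by omega) (by omega)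
  rcases Nat.even_or_odd n with hn | hn
  · simp only [FibMech, hn, Nat.even_add_one, not_true]
    refine upperMech_iff_of_modEq_add_one (fib_lt_fib_add_two _) ?_ h0 hQ
    have hid := fib_dOcagne_of_even hn
    have h : (t + fib (n + 3)) * fib (n + 2) = t * fib (n + 2) + 1 + fib (n + 4) * fib (n + 1) := by
      rw [add_mul, Nat.mul_comm (fib (n + 3)), hid]
      ring
    rw [Nat.ModEq, h, Nat.add_mul_mod_self_left]
  · simp only [FibMech, Nat.even_add_one, Nat.not_even_iff_odd.mpr hn, not_false_eq_true,
      not_true, if_false]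
    refine lowerMech_iff_of_modEq_add_one (fib_pos _) ?_ h0 hQ
    have hid := fib_dOcagne_of_odd hn
    have h : (t + fib (n + 3)) * fib (n + 2) + 1 = t * fib (n + 2) + fib (n + 4) * fib (n + 1) := by
      rw [add_mul, add_assoc, Nat.mul_comm (fib (n + 3)), ← hid]
      ring
    rw [Nat.ModEq, h, Nat.add_mul_mod_self_left]

theorem fw_getElem_eq_lb_iff : ∀ (n j : ℕ) (hj : j < (fw (n + 2)).length),
    (fw (n + 2))[j] = lb ↔ FibMech n ((j + 2) * fib n)
  | 0, j, hj => by
    have : j < 2 := hj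
    interval_cases j <;> simp [fw, fib, FibMech, UpperMech]
  | 1, j, hj => by
    have : j < 3 := hj
    interval_cases j <;> simp [fw, fib, FibMech, LowerMech]
  | n + 2, j, hj => by
    have hR : (fw (n + 3)).length = fib (n + 3) := length_fw _
    have hj' : j < fib (n + 3) + fib (n + 2) := by rw [← fib_add_two, ← length_fw]; exact hj
    have hQR : fib (n + 2) ≤ fib (n + 3) := Nat.le_add_right _ _
    rcases Nat.lt_or_ge j (fib (n + 3)) with hjR | hjR
    · have hletter : (fw (n + 4))[j] = (fw (n + 3))[j]'(by omega) :=
        List.getElem_append_left (bs := fw (n + 2)) _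
      rw [hletter, fw_getElem_eq_lb_iff (n + 1) j, ← fibMech_add_two_iff (by omega) (by omega)]
    · obtain ⟨i, rfl⟩ : ∃ i, j = i + (fw (n + 3)).length := ⟨j - fib (n + 3), by omega⟩
      have hi : i < (fw (n + 2)).length := by rw [length_fw]; omega
      have hletter : (fw (n + 4))[i + (fw (n + 3)).length] = (fw (n + 3))[i]'(by omega) :=
        (List.getElem_append_right' (fw (n + 3)) hi).symm.trans
          (List.getElem_append_left' hi (fw (n + 1)))
      rw [hletter, fw_getElem_eq_lb_iff (n + 1) i, ← fibMech_add_two_iff (by omega) (by omega),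
        ← fibMech_add_fib_iff (by omega) (by omega), hR,
        show i + 1 + 1 + fib (n + 3) = i + fib (n + 3) + 2 by omega]

end FibonacciWord

section Rotations

variable {α : Type*}

theorem map_range_rotate_lt_rotate {f : ℕ → Bool} {L i j t : ℕ} (ht : t < L)
    (hagree : ∀ m < t, f ((m + i) % L) = f ((m + j) % L))
    (hi : f ((t + i) % L) = false) (hj : f ((t + j) % L) = true) :
    ((List.range L).map f).rotate i < ((List.range L).map f).rotate j := by
  refine List.lt_iff_exists.mpr (.inr ⟨t, by simpa, by simpa, fun m hm => ?_, ?_⟩)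
  · simp [hagree m hm]
  · simp [hi, hj]

theorem getLastD_rotate_map_range (f : ℕ → α) {L : ℕ} (hL : 0 < L) (i : ℕ) (d : α) :
    (((List.range L).map f).rotate i).getLastD d = f ((L - 1 + i) % L) := by
  rw [List.getLastD_eq_getLast?, List.getLast?_eq_getElem?,
    List.getElem?_eq_getElem (by simp; omega)]
  simp

theorem sortedRotations_eq_of_perm {w : Word} {l : List Word} (hperm : (rotations w).Perm l)
    (hsort : l.Pairwise (· ≤ ·)) : sortedRotations w = l :=
  List.Perm.eq_of_pairwise' (List.pairwise_insertionSort _ _) hsort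
    ((List.perm_insertionSort _ _).trans hperm)

end Rotations

section PlusWord

/-- For `s_{2k} b`: `p = F_{2k-2}`, `q = F_{2k-1}` and `N = F_{2k}`. -/
structure PlusParams (p q N : ℕ) : Prop where
  eq_add : N = p + q
  two_le : 2 ≤ p
  lt : p < q
  sq_add_one : p * p + 1 ≡ 0 [MOD N]

def plusLetter (p N x : ℕ) : Bool := decide (x = N ∨ UpperMech p N ((x + 2) * p))

def plusWord (p N : ℕ) : Word := (List.range (N + 1)).map (plusLetter p N)

variable {p q N : ℕ}

theorem PlusParams.mul_modEq_one (h : PlusParams p q N) : q * p ≡ 1 [MOD N] :=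
  calc q * p = q * p + 0 := rfl
    _ ≡ q * p + (p * p + 1) [MOD N] := (Nat.ModEq.add_left _ h.sq_add_one).symm
    _ = 1 + N * p := by rw [h.eq_add]; ring
    _ ≡ 1 [MOD N] := Nat.add_mul_mod_self_left 1 N p

theorem PlusParams.coprime (h : PlusParams p q N) : N.Coprime p :=
  (Nat.coprime_of_mul_modEq_one q (by rw [Nat.mul_comm]; exact h.mul_modEq_one)).symm

theorem plusLetter_self : plusLetter p N N = true := by simp [plusLetter]

theorem plusLetter_of_modEq {x c : ℕ} (hx : x < N) (hc : c < N) (h : (x + 2) * p ≡ c [MOD N]) :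
    plusLetter p N x = decide (1 ≤ c ∧ c ≤ p) := by
  unfold Nat.ModEq at h
  simp only [plusLetter, UpperMech, h, Nat.mod_eq_of_lt hc, hx.ne, false_or]

theorem PlusParams.plusLetter_eq (h : PlusParams p q N) {a b : ℕ} (ha : a + 2 < N) (hb : b < N)
    (hab : (b + 2) * p ≡ (a + 2) * p + 1 [MOD N]) : plusLetter p N b = plusLetter p N a := by
  have ⟨hN, hp, hpq, _⟩ := h
  simp only [plusLetter, hb.ne, show a ≠ N by omega, false_or, decide_eq_decide]
  exact upperMech_iff_of_modEq_add_one (by omega) hab (mul_mod_ne_zero h.coprime (by omega) ha)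
    (add_one_mul_mod_ne h.coprime (s := a + 1) (by omega) (by omega) (by omega))

theorem PlusParams.plusLetter_add_q (h : PlusParams p q N) {a : ℕ} (ha : a + 2 < N)
    (haq : a + q < N) : plusLetter p N (a + q) = plusLetter p N a := by
  refine h.plusLetter_eq ha haq ?_
  calc (a + q + 2) * p = (a + 2) * p + q * p := by ring
    _ ≡ (a + 2) * p + 1 [MOD N] := Nat.ModEq.add_left _ h.mul_modEq_one

theorem PlusParams.plusLetter_add_p (h : PlusParams p q N) {a : ℕ} (ha : a + p + 2 < N) :
    plusLetter p N (a + p) = plusLetter p N a := by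
  refine (h.plusLetter_eq ha (by omega) ?_).symm
  calc (a + 2) * p = (a + 2) * p + 0 := rfl
    _ ≡ (a + 2) * p + (p * p + 1) [MOD N] := (Nat.ModEq.add_left _ h.sq_add_one).symm
    _ = (a + p + 2) * p + 1 := by ring

theorem PlusParams.plusLetter_sub_one (h : PlusParams p q N) : plusLetter p N (N - 1) = true := by
  have ⟨hN, hp, hpq, _⟩ := h
  rw [plusLetter_of_modEq (c := p) (by omega) (by omega)]
  · exact decide_eq_true (by omega)
  · rw [show N - 1 + 2 = 1 + N by omega, add_mul, one_mul]
    exact Nat.add_mul_mod_self_left p N p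

theorem PlusParams.plusLetter_sub_two (h : PlusParams p q N) : plusLetter p N (N - 2) = false := by
  have ⟨hN, hp, hpq, _⟩ := h
  rw [plusLetter_of_modEq (c := 0) (by omega) (by omega)]
  · simp
  · rw [show N - 2 + 2 = N by omega]
    exact Nat.mul_mod_right N p

theorem PlusParams.plusLetter_q_sub_two (h : PlusParams p q N) :
    plusLetter p N (q - 2) = true := by
  have ⟨hN, hp, hpq, _⟩ := h
  rw [plusLetter_of_modEq (c := 1) (by omega) (by omega)]
  · exact decide_eq_true (by omega)
  · rw [show q - 2 + 2 = q by omega]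
    exact h.mul_modEq_one

theorem PlusParams.plusLetter_p_sub_one (h : PlusParams p q N) :
    plusLetter p N (p - 1) = true := by
  have ⟨hN, hp, hpq, _⟩ := h
  rw [plusLetter_of_modEq (c := p - 1) (by omega) (by omega)]
  · exact decide_eq_true (by omega)
  · refine Nat.ModEq.add_right_cancel' 1 ?_
    calc (p - 1 + 2) * p + 1 = p + (p * p + 1) := by rw [show p - 1 + 2 = p + 1 by omega]; ring
      _ ≡ p + 0 [MOD N] := Nat.ModEq.add_left _ h.sq_add_one
      _ = p - 1 + 1 := by omega

theorem PlusParams.plusLetter_p (h : PlusParams p q N) : plusLetter p N p = false := by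
  have ⟨hN, hp, hpq, _⟩ := h
  rw [plusLetter_of_modEq (c := 2 * p - 1) (by omega) (by omega)]
  · exact decide_eq_false (by omega)
  · refine Nat.ModEq.add_right_cancel' 1 ?_
    calc (p + 2) * p + 1 = 2 * p + (p * p + 1) := by ring
      _ ≡ 2 * p + 0 [MOD N] := Nat.ModEq.add_left _ h.sq_add_one
      _ = 2 * p - 1 + 1 := by omega

theorem PlusParams.plusLetter_zero (h : PlusParams p q N) : plusLetter p N 0 = false := by
  have ⟨hN, hp, hpq, _⟩ := h
  rw [plusLetter_of_modEq (c := 2 * p) (by omega) (by omega)]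
  · exact decide_eq_false (by omega)
  · rw [zero_add, Nat.mul_comm]

theorem PlusParams.rotate_lt_rotate_add_q (h : PlusParams p q N) {i : ℕ} (hi : i + 2 ≤ p) :
    (plusWord p N).rotate i < (plusWord p N).rotate (i + q) := by
  have ⟨hN, _, hpq, _⟩ := h
  apply map_range_rotate_lt_rotate (t := p - i) (by omega)
  · intro m hm
    rw [Nat.mod_eq_of_lt (by omega), Nat.mod_eq_of_lt (by omega), ← add_assoc,
      h.plusLetter_add_q (by omega) (by omega)]
  · rw [show p - i + i = p by omega, Nat.mod_eq_of_lt (by omega), h.plusLetter_p]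
  · rw [show p - i + (i + q) = N by omega, Nat.mod_eq_of_lt (by omega), plusLetter_self]

theorem PlusParams.rotate_lt_rotate_sub_p (h : PlusParams p q N) {i : ℕ} (hpi : p ≤ i)
    (hiN : i + 2 ≤ N) : (plusWord p N).rotate i < (plusWord p N).rotate (i - p) := by
  have ⟨hN, hp, hpq, _⟩ := h
  apply map_range_rotate_lt_rotate (t := N - 2 - i) (by omega)
  · intro m hm
    rw [Nat.mod_eq_of_lt (by omega), Nat.mod_eq_of_lt (by omega),
      show m + i = m + (i - p) + p by omega, h.plusLetter_add_p (by omega)]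
  · rw [show N - 2 - i + i = N - 2 by omega, Nat.mod_eq_of_lt (by omega), h.plusLetter_sub_two]
  · rw [show N - 2 - i + (i - p) = q - 2 by omega, Nat.mod_eq_of_lt (by omega),
      h.plusLetter_q_sub_two]

theorem PlusParams.rotate_p_sub_one_lt_rotate_self (h : PlusParams p q N) :
    (plusWord p N).rotate (p - 1) < (plusWord p N).rotate N := by
  have ⟨hN, hp, hpq, _⟩ := h
  apply map_range_rotate_lt_rotate (t := q - 1) (by omega)
  · intro m hm
    rcases Nat.eq_zero_or_pos m with rfl | hm0
    · rw [Nat.mod_eq_of_lt (by omega), Nat.mod_eq_of_lt (by omega)]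
      simp only [Nat.zero_add, h.plusLetter_p_sub_one, plusLetter_self]
    · rw [Nat.mod_eq_of_lt (by omega), show (m + N) % (N + 1) = m - 1 by
          rw [show m + N = m - 1 + 1 * (N + 1) by omega, Nat.add_mul_mod_self_right]
          exact Nat.mod_eq_of_lt (by omega),
        show m + (p - 1) = m - 1 + p by omega, h.plusLetter_add_p (by omega)]
  · rw [show q - 1 + (p - 1) = N - 2 by omega, Nat.mod_eq_of_lt (by omega), h.plusLetter_sub_two]
  · rw [show (q - 1 + N) % (N + 1) = q - 2 by
        rw [show q - 1 + N = q - 2 + 1 * (N + 1) by omega, Nat.add_mul_mod_self_right]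
        exact Nat.mod_eq_of_lt (by omega),
      h.plusLetter_q_sub_two]

theorem PlusParams.rotate_self_lt_rotate_sub_one (h : PlusParams p q N) :
    (plusWord p N).rotate N < (plusWord p N).rotate (N - 1) := by
  have ⟨hN, hp, _, _⟩ := h
  apply map_range_rotate_lt_rotate (t := 1) (by omega)
  · intro m hm
    rw [show m = 0 by omega, Nat.mod_eq_of_lt (by omega), Nat.mod_eq_of_lt (by omega)]
    simp only [Nat.zero_add, plusLetter_self, h.plusLetter_sub_one]
  · rw [show 1 + N = N + 1 by omega, Nat.mod_self, h.plusLetter_zero]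
  · rw [show 1 + (N - 1) = N by omega, Nat.mod_eq_of_lt (by omega), plusLetter_self]

/-- The start of the `j`-th smallest conjugate of `plusWord p N`, for `j ≤ N`: for `j < N - 1`
it is the `x < N` with `(x + 1) p ≡ j + 1 (mod N)`, and the last two are `N` and `N - 1`. -/
def sortedStart (q N j : ℕ) : ℕ :=
  if j + 1 < N then ((j + 1) * q - 1) % N else if j + 1 = N then N else N - 1

theorem sortedStart_of_lt {j : ℕ} (hj : j + 1 < N) : sortedStart q N j = ((j + 1) * q - 1) % N :=
  if_pos hj

theorem sortedStart_sub_one (hN : 0 < N) : sortedStart q N (N - 1) = N := by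
  rw [sortedStart, if_neg (by omega), if_pos (by omega)]

theorem sortedStart_self : sortedStart q N N = N - 1 := by
  rw [sortedStart, if_neg (by omega), if_neg (by omega)]

theorem PlusParams.add_one_mul_sortedStart (h : PlusParams p q N) {j : ℕ} (hj : j + 1 < N) :
    (sortedStart q N j + 1) * p ≡ j + 1 [MOD N] := by
  have hq : 0 < (j + 1) * q := Nat.mul_pos j.succ_pos (by have := h.lt; omega)
  rw [sortedStart_of_lt hj]
  calc (((j + 1) * q - 1) % N + 1) * p ≡ ((j + 1) * q - 1 + 1) * p [MOD N] :=
        ((Nat.mod_modEq _ N).add_right 1).mul_right p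
    _ = (j + 1) * (q * p) := by rw [Nat.sub_add_cancel hq, Nat.mul_assoc]
    _ ≡ (j + 1) * 1 [MOD N] := h.mul_modEq_one.mul_left _
    _ = j + 1 := Nat.mul_one _

theorem PlusParams.sortedStart_add_one_lt (h : PlusParams p q N) {j : ℕ} (hj : j + 1 < N) :
    sortedStart q N j + 1 < N := by
  have hlt : sortedStart q N j < N := by rw [sortedStart_of_lt hj]; exact Nat.mod_lt _ (by omega)
  by_contra hge
  have hmod := h.add_one_mul_sortedStart hj
  rw [show sortedStart q N j + 1 = N by omega, Nat.ModEq, Nat.mul_mod_right,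
    Nat.mod_eq_of_lt hj] at hmod
  omega

theorem PlusParams.sortedStart_injective (h : PlusParams p q N) {i j : ℕ} (hi : i + 1 < N)
    (hj : j + 1 < N) (hij : sortedStart q N i = sortedStart q N j) : i = j := by
  have hmod := (h.add_one_mul_sortedStart hi).symm.trans (hij ▸ h.add_one_mul_sortedStart hj)
  rw [Nat.ModEq, Nat.mod_eq_of_lt hi, Nat.mod_eq_of_lt hj] at hmod
  omega

theorem PlusParams.sortedStart_succ (h : PlusParams p q N) {j : ℕ} (hj : j + 2 < N) :
    sortedStart q N (j + 1) =
      if sortedStart q N j < p then sortedStart q N j + q else sortedStart q N j - p := by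
  have hN := h.eq_add
  have hq : 0 < (j + 1) * q := Nat.mul_pos j.succ_pos (by have := h.lt; omega)
  have hlt := h.sortedStart_add_one_lt (j := j) (by omega)
  have hrec : sortedStart q N (j + 1) = (sortedStart q N j + q) % N := by
    rw [sortedStart_of_lt hj, sortedStart_of_lt (by omega), Nat.mod_add_mod,
      show (j + 1 + 1) * q - 1 = (j + 1) * q - 1 + q by rw [add_one_mul]; omega]
  rw [hrec]
  split_ifs with hp
  · exact Nat.mod_eq_of_lt (by omega)
  · rw [Nat.mod_eq_sub_mod (by omega), Nat.mod_eq_of_lt (by omega)]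
    omega

theorem PlusParams.sortedStart_sub_two (h : PlusParams p q N) :
    sortedStart q N (N - 2) = p - 1 := by
  have ⟨hN, hp, hpq, _⟩ := h
  rw [sortedStart_of_lt (by omega)]
  obtain ⟨r, rfl⟩ : ∃ r, q = r + 1 := ⟨q - 1, by omega⟩
  obtain ⟨s, rfl⟩ : ∃ s, p = s + 1 := ⟨p - 1, by omega⟩
  rw [show (N - 2 + 1) * (r + 1) - 1 = s + N * r by
      rw [show N - 2 + 1 = s + r + 1 by omega, hN]
      exact Nat.sub_eq_of_eq_add (by ring),
    Nat.add_mul_mod_self_left, Nat.mod_eq_of_lt (by omega), Nat.add_sub_cancel]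

theorem PlusParams.rotate_sortedStart_lt (h : PlusParams p q N) {j : ℕ} (hj : j < N) :
    (plusWord p N).rotate (sortedStart q N j) <
      (plusWord p N).rotate (sortedStart q N (j + 1)) := by
  have ⟨hN, hp, hpq, _⟩ := h
  rcases Nat.lt_or_ge (j + 2) N with hj2 | hj2
  · have hlt := h.sortedStart_add_one_lt (j := j) (by omega)
    have hne : sortedStart q N j ≠ p - 1 := fun heq =>
      absurd (h.sortedStart_injective (by omega) (by omega) (heq.trans h.sortedStart_sub_two.symm))
        (by omega)
    rw [h.sortedStart_succ hj2]
    split_ifs with hjp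
    · exact h.rotate_lt_rotate_add_q (by omega)
    · exact h.rotate_lt_rotate_sub_p (by omega) (by omega)
  · rcases (show j + 2 = N ∨ j + 1 = N by omega) with hjN | hjN
    · rw [show j = N - 2 by omega, h.sortedStart_sub_two, show N - 2 + 1 = N - 1 by omega,
        sortedStart_sub_one (by omega)]
      exact h.rotate_p_sub_one_lt_rotate_self
    · rw [show j = N - 1 by omega, sortedStart_sub_one (by omega), show N - 1 + 1 = N by omega,
        sortedStart_self]
      exact h.rotate_self_lt_rotate_sub_one

theorem PlusParams.sortedStart_cases (h : PlusParams p q N) {j : ℕ} (hj : j ≤ N) :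
    (j + 1 < N ∧ sortedStart q N j + 1 < N) ∨ (j = N - 1 ∧ sortedStart q N j = N) ∨
      (j = N ∧ sortedStart q N j = N - 1) := by
  have ⟨hN, hp, _, _⟩ := h
  rcases (show j + 1 < N ∨ j = N - 1 ∨ j = N by omega) with hj' | rfl | rfl
  · exact .inl ⟨hj', h.sortedStart_add_one_lt hj'⟩
  · exact .inr (.inl ⟨rfl, sortedStart_sub_one (by omega)⟩)
  · exact .inr (.inr ⟨rfl, sortedStart_self⟩)

theorem PlusParams.perm_map_sortedStart (h : PlusParams p q N) :
    ((List.range (N + 1)).map (sortedStart q N)).Perm (List.range (N + 1)) := by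
  have ⟨hN, hp, _, _⟩ := h
  have hinj : ∀ i ∈ List.range (N + 1), ∀ j ∈ List.range (N + 1),
      sortedStart q N i = sortedStart q N j → i = j := by
    intro i hi j hj hij
    rw [List.mem_range, Nat.lt_succ_iff] at hi hj
    rcases h.sortedStart_cases hi with ⟨hi', hσi⟩ | ⟨hi', hσi⟩ | ⟨hi', hσi⟩ <;>
    rcases h.sortedStart_cases hj with ⟨hj', hσj⟩ | ⟨hj', hσj⟩ | ⟨hj', hσj⟩ <;>
    first | exact h.sortedStart_injective hi' hj' hij | omega
  refine (List.subperm_of_subset (List.nodup_range.map_on hinj) ?_).perm_of_length_le (by simp)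
  intro x hx
  obtain ⟨j, hj, rfl⟩ := List.mem_map.mp hx
  rw [List.mem_range, Nat.lt_succ_iff] at hj ⊢
  rcases h.sortedStart_cases hj with ⟨-, hσ⟩ | ⟨-, hσ⟩ | ⟨-, hσ⟩ <;> omega

theorem PlusParams.getLastD_rotate_sortedStart (h : PlusParams p q N) {j : ℕ} (hj : j ≤ N) :
    ((plusWord p N).rotate (sortedStart q N j)).getLastD la = decide (j < p ∨ j = N - 1) := by
  have ⟨hN, hp, hpq, _⟩ := h
  rw [plusWord, getLastD_rotate_map_range _ (by omega : 0 < N + 1), Nat.add_sub_cancel]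
  rcases h.sortedStart_cases hj with ⟨hj', hσ⟩ | ⟨hj', hσ⟩ | ⟨hj', hσ⟩
  · have hmod := h.add_one_mul_sortedStart hj'
    rcases Nat.eq_zero_or_pos (sortedStart q N j) with h0 | h0
    · rw [h0, zero_add, one_mul, Nat.ModEq, Nat.mod_eq_of_lt (by omega),
        Nat.mod_eq_of_lt hj'] at hmod
      rw [h0, add_zero, Nat.mod_eq_of_lt (by omega), plusLetter_self, decide_eq_true (by omega)]
    · rw [show N + sortedStart q N j = sortedStart q N j - 1 + 1 * (N + 1) by omega,
        Nat.add_mul_mod_self_right, Nat.mod_eq_of_lt (by omega),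
        plusLetter_of_modEq (c := j + 1) (by omega) hj'
          (by rwa [show sortedStart q N j - 1 + 2 = sortedStart q N j + 1 by omega]),
        decide_eq_decide]
      omega
  · rw [hσ, show N + N = N - 1 + 1 * (N + 1) by omega, Nat.add_mul_mod_self_right,
      Nat.mod_eq_of_lt (by omega), h.plusLetter_sub_one, decide_eq_true (.inr hj')]
  · rw [hσ, show N + (N - 1) = N - 2 + 1 * (N + 1) by omega, Nat.add_mul_mod_self_right,
      Nat.mod_eq_of_lt (by omega), h.plusLetter_sub_two, decide_eq_false (by omega)]

theorem PlusParams.sortedRotations_plusWord (h : PlusParams p q N) :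
    sortedRotations (plusWord p N) =
      (List.range (N + 1)).map fun j => (plusWord p N).rotate (sortedStart q N j) := by
  apply sortedRotations_eq_of_perm
  · have hperm := (h.perm_map_sortedStart.map (plusWord p N).rotate).symm
    rw [List.map_map] at hperm
    rwa [rotations, show (plusWord p N).length = N + 1 by simp [plusWord]]
  · refine List.isChain_iff_pairwise.mp ?_
    rw [List.isChain_map, List.isChain_range_succ]
    exact fun j hj => (h.rotate_sortedStart_lt hj).le

theorem PlusParams.bwt_plusWord (h : PlusParams p q N) :
    bwt (plusWord p N) = List.replicate p lb ++ List.replicate (q - 1) la ++ [lb, la] := by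
  have ⟨hN, _, hpq, _⟩ := h
  rw [bwt, h.sortedRotations_plusWord, List.map_map]
  trans (List.range (N + 1)).map fun j => decide (j < p ∨ j = N - 1)
  · exact List.map_congr_left fun j hj =>
      h.getLastD_rotate_sortedStart (Nat.lt_succ_iff.mp (List.mem_range.mp hj))
  · refine List.ext_getElem (by simp; omega) fun i h1 h2 => ?_
    simp only [List.getElem_map, List.getElem_range, List.getElem_append, List.getElem_replicate,
      List.length_append, List.length_replicate]
    split_ifs with hi hi'
    · exact decide_eq_true (.inl hi')
    · exact decide_eq_false (by omega)
    · have hi : i = N - 1 ∨ i = N := by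
        simp only [List.length_map, List.length_range] at h1
        omega
      rcases hi with hi | hi
      · simp [hi, show N - 1 - (p + (q - 1)) = 0 by omega]
      · simp only [hi, show N - (p + (q - 1)) = 1 by omega]
        exact decide_eq_false (by omega)

end PlusWord

theorem destutter'_replicate_append {α : Type*} [DecidableEq α] (m : ℕ) (x : α) (l : List α) :
    (List.replicate m x ++ l).destutter' (· ≠ ·) x = l.destutter' (· ≠ ·) x := by
  induction m with
  | zero => rfl
  | succ m ih =>
    rw [List.replicate_succ, List.cons_append, List.destutter'_cons_neg _ (by simp), ih]

theorem runs_replicate_append {m n : ℕ} (hm : 0 < m) (hn : 0 < n) :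
    runs (List.replicate m lb ++ List.replicate n la ++ [lb, la]) = 4 := by
  obtain ⟨m, rfl⟩ : ∃ m', m = m' + 1 := ⟨m - 1, by omega⟩
  obtain ⟨n, rfl⟩ : ∃ n', n = n' + 1 := ⟨n - 1, by omega⟩
  rw [runs, List.append_assoc, List.replicate_succ, List.cons_append, List.destutter_cons',
    destutter'_replicate_append, List.replicate_succ, List.cons_append,
    List.destutter'_cons_pos _ (by decide), destutter'_replicate_append,
    List.destutter'_cons_pos _ (by decide), List.destutter'_cons_pos _ (by decide),
    List.destutter'_nil]
  rfl

theorem fw_append_lb_eq_plusWord {n : ℕ} (hn : Even n) :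
    fw (n + 2) ++ [lb] = plusWord (fib n) (fib (n + 2)) := by
  rw [plusWord, List.range_succ, List.map_append, List.map_singleton, plusLetter_self]
  congr 1
  refine List.ext_getElem (by simp [length_fw]) fun j h1 h2 => ?_
  have hj : j < fib (n + 2) := by simpa using h2
  rw [List.getElem_map, List.getElem_range]
  refine Bool.eq_iff_iff.mpr ?_
  rw [fw_getElem_eq_lb_iff, FibMech, if_pos hn, plusLetter, decide_eq_true_iff, or_iff_right hj.ne]

theorem plusParams_fib {m : ℕ} (hm : Even m) :
    PlusParams (fib (m + 2)) (fib (m + 3)) (fib (m + 4)) where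
  eq_add := (fib_add_two (m + 2)).trans (Nat.add_comm _ _)
  two_le := Nat.add_le_add (fib_pos (m + 1)) (fib_pos m)
  lt := Nat.lt_add_of_pos_right (fib_pos (m + 1))
  sq_add_one := by rw [← sq, fib_catalan_of_even hm]; exact Nat.mul_mod_left _ _

end BWT

open BWT in
/-- for `k ≥ 2`, the Fibonacci-plus word `v = s_{2k}·b` has
`bwt(v) = b^{F_{2k-2}} a^{F_{2k-1}-1} b a`, hence `r(v) = 4`. -/
theorem stmt3 (k : ℕ) (hk : 2 ≤ k) :
    bwt (fw (2*k) ++ [lb]) =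
      List.replicate (fib (2*k-2)) lb ++ List.replicate (fib (2*k-1) - 1) la ++ [lb, la] ∧
    rr (fw (2*k) ++ [lb]) = 4 := by
  obtain ⟨m, rfl⟩ : ∃ m, k = m + 2 := ⟨k - 2, by omega⟩
  have h := plusParams_fib (even_two_mul m)
  have hv : fw (2 * (m + 2)) ++ [lb] = plusWord (fib (2 * m + 2)) (fib (2 * m + 4)) :=
    fw_append_lb_eq_plusWord (n := 2 * m + 2) ⟨m + 1, by ring⟩
  have ⟨_, hp, hpq, _⟩ := h
  rw [show 2 * (m + 2) - 2 = 2 * m + 2 by omega, show 2 * (m + 2) - 1 = 2 * m + 3 by omega, rr, hv,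
    h.bwt_plusWord]
  exact ⟨rfl, runs_replicate_append (by omega) (by omega)⟩
end

section
/- For every k ≥ 2, let v = s_{2k}·b (so v = x_{2k}·a·b·b and |v| = F_{2k}+1). Among the conjugates of v sorted lexicographically, the largest is b·b·x_{2k}·a and the second largest is b·x_{2k}·a·b; every other conjugate of v is lexicographically smaller than b·x_{2k}·a·b. -/
/-!
Consecutive Fibonacci words almost commute: `s_m s_{m+1}` and `s_{m+1} s_m` agree except for
their last two letters, which are `ab` in one and `ba` in the other, the order depending on the
parity of `m`. Splitting `s_{n+3} = s_{n+2} s_{n+1}`, this shows by induction that whenever `b`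
occurs in `s_n` before its last letter, the suffix after it falls below `s_n` at a mismatch; the
only exceptions, for odd `n`, are suffixes equal to some `s_r` with `r` odd. For even `n` every
conjugate of `s_n b` other than `b s_n` and `bb x_n a` therefore starts with `a` or is below `b s_n`,
and `b s_n < bb x_n a` because `s_n` starts with `a`.
-/

open List

namespace BWT

/-- Unlike `u < w`, this is stable under extending both words on the right. -/
def MismatchLT {α : Type*} [LT α] (u w : List α) : Prop :=
  ∃ p a b, a < b ∧ p ++ [a] <+: u ∧ p ++ [b] <+: w

namespace MismatchLT

variable {α : Type*} [LT α] {u w u' w' : List α}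

theorem lt (h : MismatchLT u w) : u < w := by
  obtain ⟨p, a, b, hab, ⟨u₁, rfl⟩, ⟨w₁, rfl⟩⟩ := h
  show List.Lex (· < ·) _ _
  induction p with
  | nil => exact List.Lex.rel hab
  | cons c p ih => exact List.Lex.cons ih

theorem mono (h : MismatchLT u w) (hu : u <+: u') (hw : w <+: w') : MismatchLT u' w' := by
  obtain ⟨p, a, b, hab, hpu, hpw⟩ := h
  exact ⟨p, a, b, hab, hpu.trans hu, hpw.trans hw⟩

end MismatchLT

theorem fw_eq_la_cons : ∀ {n : ℕ}, n ≠ 0 → ∃ t, fw n = la :: t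
  | 1, _ => ⟨[], rfl⟩
  | n + 2, _ => by
    obtain ⟨t, ht⟩ := fw_eq_la_cons (n := n + 1) (by omega)
    exact ⟨t ++ fw n, by rw [fw, ht, cons_append]⟩

theorem fw_prefix_fw {i j : ℕ} (hi : i ≠ 0) (hij : i ≤ j) : fw i <+: fw j := by
  induction j, hij using Nat.le_induction with
  | base => exact prefix_rfl
  | succ j hij ih =>
    obtain ⟨m, rfl⟩ : ∃ m, j = m + 1 := ⟨j - 1, by omega⟩
    exact ih.trans (prefix_append _ _)

theorem fw_append_fw_succ : ∀ m : ℕ, ∃ y : Word,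
    fw m ++ fw (m + 1) = y ++ [decide (Even m), decide (Even (m + 1))] ∧
      fw (m + 1) ++ fw m = y ++ [decide (Even (m + 1)), decide (Even m)]
  | 0 => ⟨[], by simp [fw]⟩
  | m + 1 => by
    obtain ⟨y, h₁, h₂⟩ := fw_append_fw_succ m
    have hpar : decide (Even (m + 2)) = decide (Even m) := by simp [Nat.even_add_one]
    refine ⟨fw (m + 1) ++ y, ?_, ?_⟩
    · rw [fw, ← append_assoc, append_assoc (fw (m + 1)), h₂, hpar, append_assoc]
    · rw [fw, append_assoc, h₁, hpar, append_assoc]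

theorem fw_add_two_eq (m : ℕ) :
    ∃ y : Word, fw (m + 2) = y ++ [decide (Even (m + 1)), decide (Even m)] := by
  obtain ⟨y, -, h⟩ := fw_append_fw_succ m
  exact ⟨y, by rw [fw, h]⟩

theorem even_of_fw_add_two_eq_append_lb {n : ℕ} {u : Word} (h : fw (n + 2) = u ++ [lb]) :
    Even n := by
  obtain ⟨y, hy⟩ := fw_add_two_eq n
  rw [h] at hy
  simpa using congrArg getLast? hy

theorem fw_eq_x_append {n : ℕ} (hn : Even n) (hn0 : n ≠ 0) : fw n = x n ++ [la, lb] := by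
  obtain ⟨m, rfl⟩ : ∃ m, n = m + 2 := ⟨n - 2, by obtain ⟨j, rfl⟩ := hn; omega⟩
  obtain ⟨y, hy⟩ := fw_add_two_eq m
  have hm : Even m := by simpa [Nat.even_add_one] using hn
  have hfw : fw (m + 2) = y ++ [la, lb] := by simpa [Nat.even_add_one, hm] using hy
  rw [hfw, x, hfw]
  simp

theorem mismatchLT_fw_append_fw {r m m' : ℕ} (hr : Odd r) (hm : r + 1 ≤ m) (hm' : r + 2 ≤ m') :
    MismatchLT (fw r ++ fw m) (fw m') := by
  obtain ⟨y, h₁, h₂⟩ := fw_append_fw_succ r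
  have hr' : ¬Even r := Nat.not_even_iff_odd.mpr hr
  simp only [Nat.even_add_one, hr', decide_false, decide_true, not_false_eq_true] at h₁ h₂
  refine ⟨y, la, lb, by decide, ?_, ?_⟩
  · refine (h₁ ▸ ⟨[lb], by simp⟩ : y ++ [la] <+: fw r ++ fw (r + 1)).trans ?_
    obtain ⟨t, ht⟩ := fw_prefix_fw (by omega) hm
    exact ⟨t, by rw [append_assoc, ht]⟩
  · refine (?_ : y ++ [lb] <+: fw (r + 2)).trans (fw_prefix_fw (by omega) hm')
    rw [fw, h₂]
    exact ⟨[la], by simp⟩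

theorem fw_suffix_after_lb : ∀ (n : ℕ) {u t : Word}, fw n = u ++ lb :: t → t ≠ [] →
    MismatchLT t (fw n) ∨ (Odd n ∧ ∃ r, Odd r ∧ r < n ∧ t = fw r)
  | 0, u, t, h, ht => by rcases u with _ | ⟨c, u⟩ <;> simp_all [fw]
  | 1, u, t, h, _ => by rcases u with _ | ⟨c, u⟩ <;> simp_all [fw]
  | 2, u, t, h, ht => by rcases u with _ | ⟨c, _ | ⟨d, u⟩⟩ <;> simp_all [fw]
  | n + 3, u, t, h, ht => by
    have hfw : fw (n + 3) = fw (n + 2) ++ fw (n + 1) := rfl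
    rw [hfw, append_eq_append_iff] at h
    rcases h with ⟨u', -, hu'⟩ | ⟨_ | ⟨c, t'⟩, hu, ht'⟩
    · rcases fw_suffix_after_lb (n + 1) hu' ht with hlt | ⟨hodd, r, hr, hrn, rfl⟩
      · exact .inl (hlt.mono prefix_rfl (fw_prefix_fw (by omega) (by omega)))
      · exact .inr ⟨by grind, r, hr, by omega, rfl⟩
    · obtain ⟨s, hs⟩ := fw_eq_la_cons (n := n + 1) (by omega)
      simp [hs] at ht'
    · obtain ⟨rfl, rfl⟩ := cons_eq_cons.mp ht'
      rcases eq_or_ne t' [] with rfl | ht''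
      · have hn := even_of_fw_add_two_eq_append_lb hu
        exact .inr ⟨by grind, n + 1, by grind, by omega, rfl⟩
      · rcases fw_suffix_after_lb (n + 2) hu ht'' with hlt | ⟨hodd, r, hr, hrn, rfl⟩
        · exact .inl (hlt.mono (prefix_append _ _) (hfw ▸ prefix_append _ _))
        · have hrn' : r ≠ n + 1 := by rintro rfl; grind
          exact .inl (mismatchLT_fw_append_fw hr (by omega) (by omega))

theorem mismatchLT_fw_of_even {n : ℕ} (hn : Even n) {u t : Word} (h : fw n = u ++ lb :: t)
    (ht : t ≠ []) : MismatchLT t (fw n) :=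
  (fw_suffix_after_lb n h ht).resolve_right fun ⟨hodd, _⟩ => Nat.not_odd_iff_even.mpr hn hodd

theorem rotate_append_singleton {α : Type*} {s : List α} {c : α} {i : ℕ}
    (hi : i < (s ++ [c]).length) : ∃ p q, s = p ++ q ∧ (s ++ [c]).rotate i = q ++ c :: p := by
  have hi' : i ≤ s.length := by simpa [Nat.lt_succ_iff] using hi
  refine ⟨s.take i, s.drop i, (take_append_drop i s).symm, ?_⟩
  rw [rotate_eq_drop_append_take hi.le, drop_append_of_le_length hi',
    take_append_of_le_length hi', append_assoc, singleton_append]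

theorem rotate_fw_append_lb_eq_or_lt {n : ℕ} (hn : Even n) (hn0 : n ≠ 0) {i : ℕ}
    (hi : i < (fw n ++ [lb]).length) :
    (fw n ++ [lb]).rotate i = [lb, lb] ++ x n ++ [la] ∨
      (fw n ++ [lb]).rotate i = [lb] ++ fw n ∨ (fw n ++ [lb]).rotate i < [lb] ++ fw n := by
  obtain ⟨p, q, hs, hrot⟩ := rotate_append_singleton hi
  rw [hrot]
  rcases q with _ | ⟨_ | _, t⟩
  · simp [hs]
  · exact .inr <| .inr <| List.Lex.rel (by decide)
  · rcases eq_or_ne t [] with rfl | ht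
    · left
      rw [fw_eq_x_append hn hn0] at hs
      obtain rfl : p = x n ++ [la] := by simpa using (congrArg dropLast hs).symm
      simp
    · refine .inr <| .inr <| List.Lex.cons (MismatchLT.lt ?_)
      exact (mismatchLT_fw_of_even hn hs ht).mono (prefix_append _ _) prefix_rfl

end BWT

open BWT in
/-- for `v = s_{2k}·b` (`k ≥ 2`), the lexicographically largest conjugate is
`b·b·x_{2k}·a`, the second largest is `b·x_{2k}·a·b`, and every other conjugate is strictly
smaller than `b·x_{2k}·a·b`. -/
theorem stmt5 (k : ℕ) (hk : 2 ≤ k) :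
    (∃ i < (fw (2*k) ++ [lb]).length,
      (fw (2*k) ++ [lb]).rotate i = [lb, lb] ++ x (2*k) ++ [la]) ∧
    (∃ i < (fw (2*k) ++ [lb]).length,
      (fw (2*k) ++ [lb]).rotate i = [lb] ++ x (2*k) ++ [la, lb]) ∧
    (∀ i < (fw (2*k) ++ [lb]).length,
      (fw (2*k) ++ [lb]).rotate i ≤ [lb, lb] ++ x (2*k) ++ [la]) ∧
    (∀ i < (fw (2*k) ++ [lb]).length,
      (fw (2*k) ++ [lb]).rotate i ≠ [lb, lb] ++ x (2*k) ++ [la] →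
      (fw (2*k) ++ [lb]).rotate i ≠ [lb] ++ x (2*k) ++ [la, lb] →
      (fw (2*k) ++ [lb]).rotate i < [lb] ++ x (2*k) ++ [la, lb]) := by
  have hn : Even (2 * k) := even_two_mul k
  have hn0 : 2 * k ≠ 0 := by omega
  have hs := fw_eq_x_append hn hn0
  have hsecond : [lb] ++ x (2 * k) ++ [la, lb] = [lb] ++ fw (2 * k) := by rw [hs, append_assoc]
  have hlt : [lb] ++ fw (2 * k) < [lb, lb] ++ x (2 * k) ++ [la] := by
    obtain ⟨t, ht⟩ := fw_eq_la_cons hn0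
    rw [ht]
    exact List.Lex.cons (List.Lex.rel (by decide))
  rw [hsecond]
  refine ⟨⟨(x (2 * k) ++ [la]).length, by simp [hs], ?_⟩,
    ⟨(fw (2 * k)).length, by simp, rotate_append_length_eq _ _⟩, fun i hi => ?_,
    fun i hi hmax hsnd => ?_⟩
  · rw [hs, show x (2 * k) ++ [la, lb] ++ [lb] = x (2 * k) ++ [la] ++ [lb, lb] by simp,
      rotate_append_length_eq, append_assoc]
  · rcases rotate_fw_append_lb_eq_or_lt hn hn0 hi with h | h | h
    exacts [h.le, h ▸ hlt.le, (h.trans hlt).le]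
  · rcases rotate_fw_append_lb_eq_or_lt hn hn0 hi with h | h | h
    exacts [absurd h hmax, absurd h hsnd, h]
end

section
/- For every k ≥ 2, let v = s_{2k}·b (so v^rev = b·b·a·x_{2k}). Every conjugate of v^rev that is lexicographically strictly smaller than the conjugate x_{2k}·b·b·a ends with the letter b. -/
namespace BWT

lemma exists_block_of_prefix_flatMap {α β : Type*} (g : α → List β) :
    ∀ {L : List α} {Q : List β} {d : β}, Q ++ [d] <+: L.flatMap g →
      ∃ u c s, u ++ [c] <+: L ∧ Q = u.flatMap g ++ s ∧ s ++ [d] <+: g c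
  | [], Q, d, h => by simp at h
  | a :: L, Q, d, h => by
    rw [List.flatMap_cons] at h
    by_cases hQ : Q.length < (g a).length
    · exact ⟨[], a, Q, by simp, by simp,
        List.prefix_of_prefix_length_le h (List.prefix_append _ _) (by simp; omega)⟩
    · obtain ⟨Q', rfl⟩ : g a <+: Q :=
        List.prefix_of_prefix_length_le (List.prefix_append _ _)
          ((List.prefix_append _ _).trans h) (by omega)
      rw [List.append_assoc, List.prefix_append_right_inj] at h
      obtain ⟨u, c, s, hu, rfl, hs⟩ := exists_block_of_prefix_flatMap g h
      exact ⟨a :: u, c, s, by simpa using hu, by simp, hs⟩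

lemma lt_of_append_prefix {α : Type*} [LT α] {C l₁ l₂ : List α} {a b : α} (hab : a < b)
    (h₁ : C ++ [a] <+: l₁) (h₂ : C ++ [b] <+: l₂) : l₁ < l₂ := by
  obtain ⟨r₁, rfl⟩ := h₁
  obtain ⟨r₂, rfl⟩ := h₂
  simpa using List.append_left_lt (l₁ := C) (List.Lex.rel hab : a :: r₁ < b :: r₂)

lemma fw_succ_prefix_fw_succ {m n : ℕ} (h : m ≤ n) : fw (m + 1) <+: fw (n + 1) := by
  induction h with
  | refl => exact List.prefix_refl _
  | step _ ih => exact ih.trans ⟨fw _, rfl⟩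

lemma lt_length_fw_succ : ∀ n, n < (fw (n + 1)).length
  | 0 => by decide
  | 1 => by decide
  | n + 2 => by
    have h₁ := lt_length_fw_succ n
    have h₂ : n + 1 < (fw (n + 2)).length := lt_length_fw_succ (n + 1)
    show n + 2 < (fw (n + 2) ++ fw (n + 1)).length
    rw [List.length_append]
    omega

-- The square of the Fibonacci morphism `a ↦ ab, b ↦ a`.
def blk (c : Letter) : Word := bif c then [la, lb] else [la, lb, la]

def psi (w : Word) : Word := w.flatMap blk

lemma psi_append (u v : Word) : psi (u ++ v) = psi u ++ psi v := List.flatMap_append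

lemma psi_fw : ∀ n, psi (fw n) = fw (n + 2)
  | 0 => rfl
  | 1 => rfl
  | n + 2 => by
    rw [show fw (n + 2) = fw (n + 1) ++ fw n from rfl, psi_append, psi_fw (n + 1), psi_fw n]
    rfl

lemma length_le_length_psi (w : Word) : w.length ≤ (psi w).length := by
  induction w with
  | nil => rfl
  | cons c w ih => cases c <;> simp [psi, blk] at ih ⊢ <;> omega

lemma append_la_prefix_blk_cases {s : Word} {c : Letter} (h : s ++ [la] <+: blk c) :
    s = [] ∨ s = [la, lb] ∧ c = la := by
  cases c <;> rcases s with _ | ⟨_, _ | ⟨_, _ | ⟨_, _ | ⟨_, _⟩⟩⟩⟩ <;> simp_all [blk]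

-- `fw 0 = b` is left out: it is not a prefix of the later Fibonacci words.
def IsFibPrefix (w : Word) : Prop := ∃ n, w <+: fw (n + 1)

namespace IsFibPrefix

variable {u v w : Word}

lemma mono (h : u <+: v) (hv : IsFibPrefix v) : IsFibPrefix u :=
  hv.imp fun _ => h.trans

lemma prefix_of_length_le (hu : IsFibPrefix u) (hv : IsFibPrefix v)
    (h : u.length ≤ v.length) : u <+: v := by
  obtain ⟨m, hm⟩ := hu
  obtain ⟨n, hn⟩ := hv
  exact List.prefix_of_prefix_length_le (hm.trans (fw_succ_prefix_fw_succ (le_max_left m n)))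
    (hn.trans (fw_succ_prefix_fw_succ (le_max_right m n))) h

lemma exists_append_singleton (h : IsFibPrefix w) : ∃ c, IsFibPrefix (w ++ [c]) := by
  obtain ⟨n, hn⟩ := h
  obtain ⟨_ | ⟨c, t⟩, ht⟩ := hn.trans (fw_succ_prefix_fw_succ (le_max_left n w.length))
  · have := lt_length_fw_succ (max n w.length)
    rw [← ht, List.append_nil] at this
    omega
  · exact ⟨c, _, ⟨t, by simpa using ht⟩⟩

lemma psi (h : IsFibPrefix w) : IsFibPrefix (BWT.psi w) := by
  obtain ⟨n, hn⟩ := h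
  exact ⟨n + 2, psi_fw (n + 1) ▸ hn.flatMap blk⟩

lemma psi_append_la_lb (h : IsFibPrefix w) : IsFibPrefix (BWT.psi w ++ [la, lb]) := by
  obtain ⟨c, hc⟩ := h.exists_append_singleton
  refine hc.psi.mono ?_
  rw [psi_append, List.prefix_append_right_inj]
  cases c <;> simp [BWT.psi, blk]

end IsFibPrefix

-- The suffix of the Fibonacci word after an `a` exceeds the word: both continue with `P`,
-- then the word reads `a` and the suffix `b`.
theorem exists_branch_after_la (Q : Word) (hQ : IsFibPrefix (Q ++ [la])) :
    ∃ P, IsFibPrefix (P ++ [la]) ∧ IsFibPrefix (Q ++ la :: P ++ [lb]) := by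
  obtain ⟨n, hn⟩ := hQ
  have hn' : Q ++ [la] <+: psi (fw (n + 1)) :=
    psi_fw (n + 1) ▸ hn.trans (fw_succ_prefix_fw_succ (by omega : n ≤ n + 2))
  obtain ⟨u, c, s, hu, rfl, hs⟩ := exists_block_of_prefix_flatMap blk hn'
  have huc : IsFibPrefix (u ++ [c]) := ⟨n, hu⟩
  rcases append_la_prefix_blk_cases hs with rfl | ⟨rfl, rfl⟩
  · refine ⟨[], ⟨0, List.prefix_refl _⟩, ?_⟩
    simpa [psi] using (huc.mono (List.prefix_append _ _)).psi_append_la_lb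
  · have : u.length < (psi u ++ [la, lb]).length := by
      have := length_le_length_psi u
      simp; omega
    obtain ⟨P, hP, huP⟩ := exists_branch_after_la u huc
    refine ⟨psi P ++ [la, lb, la], hP.psi_append_la_lb.mono ⟨[lb], by simp [psi, blk]⟩, ?_⟩
    simpa [psi_append, psi, blk] using huP.psi_append_la_lb
termination_by Q.length

-- The two sides first differ either where the branch point `P` of the marked `a` falls inside
-- `D`, or right after `D`.
theorem lt_of_isFibPrefix {A D : Word} (h : IsFibPrefix (A ++ la :: D ++ [la])) (u v : Word) :
    A ++ la :: D ++ u < D ++ lb :: v := by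
  have hX : IsFibPrefix (A ++ la :: D) := h.mono (List.prefix_append _ _)
  obtain ⟨P, hP, hAP⟩ := exists_branch_after_la A (hX.mono (by simp))
  suffices ∃ C, C ++ [la] <+: A ++ la :: D ∧ C ++ [lb] <+: D ++ [lb] by
    obtain ⟨C, hCa, hCb⟩ := this
    exact lt_of_append_prefix (by decide) (hCa.trans (List.prefix_append _ _))
      (hCb.trans (by simp))
  rcases lt_or_ge P.length D.length with hPD | hDP
  · have hPb : P ++ [lb] <+: D := by
      have := hAP.prefix_of_length_le h (by simp; omega)
      simp only [List.append_assoc, List.cons_append, List.prefix_append_right_inj,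
        List.cons_prefix_cons, true_and] at this
      exact List.prefix_of_prefix_length_le this (List.prefix_append _ _) (by simp; omega)
    exact ⟨P, hP.prefix_of_length_le hX (by simp; omega), hPb.trans (List.prefix_append _ _)⟩
  · have hDa : D ++ [la] <+: P ++ [lb] := by
      have := h.prefix_of_length_le hAP (by simp; omega)
      simpa using this
    have hDa' : D ++ [la] <+: P := by
      rcases hDP.lt_or_eq with hlt | heq
      · exact List.prefix_of_prefix_length_le hDa (List.prefix_append _ _) (by simp; omega)
      · have := hDa.eq_of_length (by simp [heq])
        simp at this
    exact ⟨D, (hP.mono (hDa'.trans (List.prefix_append _ _))).prefix_of_length_le hX (by simp),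
      List.prefix_refl _⟩

def lastTwo (n : ℕ) : Word := if n % 2 = 0 then [la, lb] else [lb, la]

lemma lastTwo_add_two (n : ℕ) : lastTwo (n + 2) = lastTwo n := by
  simp [lastTwo]

lemma reverse_lastTwo_succ (n : ℕ) : (lastTwo (n + 1)).reverse = lastTwo n := by
  rcases Nat.mod_two_eq_zero_or_one n with h | h <;> simp [lastTwo, h, Nat.succ_mod_two_eq_zero_iff]

lemma x_add_four (n : ℕ) : x (n + 4) = fw (n + 3) ++ x (n + 2) := by
  have h : n + 1 < (fw (n + 2)).length := lt_length_fw_succ (n + 1)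
  show (fw (n + 3) ++ fw (n + 2)).take ((fw (n + 3) ++ fw (n + 2)).length - 2) = _
  rw [List.length_append, Nat.add_sub_assoc (by omega), List.take_length_add_append]
  rfl

lemma fw_eq_x_append_lastTwo : ∀ n, fw (n + 2) = x (n + 2) ++ lastTwo n
  | 0 => rfl
  | 1 => rfl
  | n + 2 => by
    rw [show fw (n + 4) = fw (n + 3) ++ fw (n + 2) from rfl, fw_eq_x_append_lastTwo n,
      x_add_four, lastTwo_add_two, List.append_assoc]

lemma fw_append_x_comm : ∀ n, fw (n + 2) ++ x (n + 3) = fw (n + 3) ++ x (n + 2)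
  | 0 => rfl
  | n + 1 => by
    rw [show fw (n + 4) = fw (n + 3) ++ fw (n + 2) from rfl, x_add_four, List.append_assoc,
      fw_append_x_comm n]

lemma reverse_x : ∀ n, (x (n + 2)).reverse = x (n + 2)
  | 0 => rfl
  | 1 => rfl
  | n + 2 => calc
      (x (n + 4)).reverse = (x (n + 2)).reverse ++ (x (n + 3) ++ lastTwo (n + 1)).reverse := by
        rw [x_add_four, List.reverse_append, fw_eq_x_append_lastTwo (n + 1)]
      _ = fw (n + 2) ++ x (n + 3) := by
        rw [List.reverse_append, reverse_x n, reverse_x (n + 1), reverse_lastTwo_succ,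
          fw_eq_x_append_lastTwo n, List.append_assoc]
      _ = x (n + 4) := by rw [fw_append_x_comm, x_add_four]

lemma eq_lb_of_rotate_lt {A D : Word} {c : Letter} (h : IsFibPrefix (A ++ c :: D ++ [la]))
    (hlt : D ++ lb :: lb :: la :: A ++ [c] < A ++ c :: D ++ [lb, lb, la]) : c = lb := by
  cases c
  · refine absurd hlt (lt_asymm ?_)
    simpa using lt_of_isFibPrefix h [lb, lb, la] (lb :: la :: A ++ [la])
  · rfl

theorem getLast?_rotate_of_lt {X : Word} (hX : IsFibPrefix (X ++ [la])) {i : ℕ}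
    (hi : i < X.length + 3) (hlt : (lb :: lb :: la :: X).rotate i < X ++ [lb, lb, la]) :
    ((lb :: lb :: la :: X).rotate i).getLast? = some lb := by
  match i, hi with
  | 0, _ =>
    rcases X.eq_nil_or_concat with rfl | ⟨A, c, rfl⟩
    · exact absurd hlt (lt_irrefl _)
    · have := eq_lb_of_rotate_lt (D := []) (by simpa using hX) (by simpa using hlt)
      simp [List.getLast?_cons, this]
  | 1, _ => simp [List.getLast?_cons]
  | 2, _ => simp [List.getLast?_cons]
  | 3, _ => simp at hlt
  | p + 4, hi =>
    obtain ⟨A, c, D, rfl, rfl⟩ : ∃ A c D, X = A ++ c :: D ∧ p = A.length :=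
      ⟨X.take p, X[p], X.drop (p + 1), by simp, by simp; omega⟩
    have hrot : (lb :: lb :: la :: (A ++ c :: D)).rotate (A.length + 4) =
        D ++ lb :: lb :: la :: A ++ [c] := by
      simpa using List.rotate_append_length_eq (lb :: lb :: la :: A ++ [c]) D
    rw [hrot] at hlt ⊢
    simp [List.getLast?_cons, eq_lb_of_rotate_lt (by simpa using hX) hlt]

end BWT

open BWT in
/-- for `k ≥ 2` and `v = s_{2k}·b`, every conjugate of `v^rev` that is
lexicographically strictly smaller than `x_{2k}·b·b·a` ends with the letter `b`. -/
theorem stmt12 (k : ℕ) (hk : 2 ≤ k) :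
    ∀ i < ((fw (2*k) ++ [lb]).reverse).length,
      ((fw (2*k) ++ [lb]).reverse).rotate i < x (2*k) ++ [lb, lb, la] →
      (((fw (2*k) ++ [lb]).reverse).rotate i).getLast? = some lb := by
  obtain ⟨n, rfl⟩ : ∃ n, k = n + 1 := ⟨k - 1, by omega⟩
  rw [show 2 * (n + 1) = 2 * n + 2 by ring]
  have hfw : fw (2 * n + 2) = x (2 * n + 2) ++ [la, lb] := by
    simpa [lastTwo] using fw_eq_x_append_lastTwo (2 * n)
  have hrev : (fw (2 * n + 2) ++ [lb]).reverse = lb :: lb :: la :: x (2 * n + 2) := by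
    simp [hfw, reverse_x]
  have hX : IsFibPrefix (x (2 * n + 2) ++ [la]) := ⟨2 * n + 1, hfw ▸ ⟨[lb], by simp⟩⟩
  rw [hrev]
  intro i hi
  exact getLast?_rotate_of_lt hX (by simp at hi; omega)
end
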